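/- arXiv:0902.2946 — 5 statements merged into one kernel-verified Lean document; each statement's English description precedes it below -/
import Mathlib

section
/- If Q₀ : Y → Y is a compact operator, then the kernel of L is a finite-dimensional subspace of X and dim ker L = dim ker(I − Q₀). -/
/-!
Since `T` is an isomorphism, `L u = 0` says exactly that `T u = (w, 0)` with
`w = ℓ₀ (T⁻¹ (w, 0)) = Q₀ w`. Hence `w ↦ T⁻¹ (w, 0) = P w` is a linear isomorphism from the fixed
space `ker (I - Q₀)` onto `ker L`. On that fixed space `Q₀` restricts to the identity, which is
therefore compact, so by Riesz's theorem the fixed space is finite-dimensional.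
-/

theorem IsCompactOperator.finiteDimensional_ker_id_sub {𝕜 E : Type*}
    [NontriviallyNormedField 𝕜] [CompleteSpace 𝕜]
    [AddCommGroup E] [Module 𝕜 E] [TopologicalSpace E] [T2Space E]
    [IsTopologicalAddGroup E] [ContinuousSMul 𝕜 E]
    {Q : E →L[𝕜] E} (hQ : IsCompactOperator Q) :
    FiniteDimensional 𝕜 (LinearMap.ker ((ContinuousLinearMap.id 𝕜 E - Q : E →L[𝕜] E) : E →ₗ[𝕜] E)) := by
  set N := LinearMap.ker ((ContinuousLinearMap.id 𝕜 E - Q : E →L[𝕜] E) : E →ₗ[𝕜] E)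
  have hfix : ∀ w ∈ N, Q w = w := fun w hw => (sub_eq_zero.mp hw).symm
  have hN : ∀ w ∈ N, (Q : E →ₗ[𝕜] E) w ∈ N := fun w hw => by
    rw [ContinuousLinearMap.coe_coe, hfix w hw]; exact hw
  have hrestrict : IsCompactOperator ((Q : E →ₗ[𝕜] E).restrict hN) :=
    hQ.restrict hN (ContinuousLinearMap.isClosed_ker _)
  have hid : ((Q : E →ₗ[𝕜] E).restrict hN : N → N) = id :=
    funext fun w => Subtype.ext (hfix w w.2)
  exact FiniteDimensional.of_isCompactOperator_id (hid ▸ hrestrict)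

section KernelOfFstPerturbation

variable {R X Y Z : Type*} [Ring R] [AddCommGroup X] [Module R X]
  [AddCommGroup Y] [Module R Y] [AddCommGroup Z] [Module R Z]
  {T : X ≃ₗ[R] Y × Z} {ℓ : X →ₗ[R] Y} {L : X →ₗ[R] Y × Z} {A : Y →ₗ[R] Y}

theorem mem_ker_of_fst_sub_iff (hL : ∀ u, L u = ((T u).1 - ℓ u, (T u).2)) {u : X} :
    u ∈ LinearMap.ker L ↔ T u = (ℓ u, 0) := by
  rw [LinearMap.mem_ker, hL, Prod.mk_eq_zero, sub_eq_zero, Prod.ext_iff]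

theorem symm_mem_ker_of_fst_sub (hL : ∀ u, L u = ((T u).1 - ℓ u, (T u).2))
    (hA : ∀ y, A y = y - ℓ (T.symm (y, 0))) {w : Y} (hw : w ∈ LinearMap.ker A) :
    T.symm (w, 0) ∈ LinearMap.ker L := by
  rw [mem_ker_of_fst_sub_iff hL, T.apply_symm_apply, ← sub_eq_zero.mp ((hA w).symm.trans hw)]

theorem symm_fst_zero_of_mem_ker_fst_sub (hL : ∀ u, L u = ((T u).1 - ℓ u, (T u).2))
    {u : X} (hu : u ∈ LinearMap.ker L) : T.symm ((T u).1, 0) = u := by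
  rw [mem_ker_of_fst_sub_iff hL] at hu
  exact T.symm_apply_eq.mpr (Prod.ext rfl (congr_arg Prod.snd hu).symm)

theorem fst_mem_ker_of_mem_ker_fst_sub (hL : ∀ u, L u = ((T u).1 - ℓ u, (T u).2))
    (hA : ∀ y, A y = y - ℓ (T.symm (y, 0))) {u : X} (hu : u ∈ LinearMap.ker L) :
    (T u).1 ∈ LinearMap.ker A := by
  rw [LinearMap.mem_ker, hA, symm_fst_zero_of_mem_ker_fst_sub hL hu, sub_eq_zero]
  exact congr_arg Prod.fst ((mem_ker_of_fst_sub_iff hL).mp hu)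

variable (T) in
def kerEquivKerOfFstSub (hL : ∀ u, L u = ((T u).1 - ℓ u, (T u).2))
    (hA : ∀ y, A y = y - ℓ (T.symm (y, 0))) :
    LinearMap.ker A ≃ₗ[R] LinearMap.ker L where
  toFun w := ⟨T.symm (w, 0), symm_mem_ker_of_fst_sub hL hA w.2⟩
  invFun u := ⟨(T u).1, fst_mem_ker_of_mem_ker_fst_sub hL hA u.2⟩
  map_add' v w := by ext; simp [← map_add]
  map_smul' c w := by ext; simp [← map_smul]
  left_inv w := Subtype.ext (by simp)
  right_inv u := Subtype.ext (symm_fst_zero_of_mem_ker_fst_sub hL u.2)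

end KernelOfFstPerturbation

theorem stmt_4_general
    {X Y Z : Type*}
    [NormedAddCommGroup X] [NormedSpace ℝ X]
    [NormedAddCommGroup Y] [NormedSpace ℝ Y]
    [NormedAddCommGroup Z] [NormedSpace ℝ Z]
    (T : X ≃L[ℝ] Y × Z)
    (P : Y →L[ℝ] X)
    (hP : ∀ y : Y, P y = T.symm (y, 0))
    (ℓ₀ : X →L[ℝ] Y)
    (Q₀ : Y →L[ℝ] Y) (hQ₀ : ∀ y : Y, Q₀ y = ℓ₀ (P y))
    (L : X →L[ℝ] Y × Z)
    (hL : ∀ u : X, L u = ((T u).1 - ℓ₀ u, (T u).2))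
    (hcomp : IsCompactOperator ⇑Q₀) :
    FiniteDimensional ℝ (LinearMap.ker (L : X →ₗ[ℝ] Y × Z)) ∧
    Module.finrank ℝ (LinearMap.ker (L : X →ₗ[ℝ] Y × Z)) =
      Module.finrank ℝ (LinearMap.ker ((ContinuousLinearMap.id ℝ Y - Q₀ : Y →L[ℝ] Y) : Y →ₗ[ℝ] Y)) := by
  have hfin := hcomp.finiteDimensional_ker_id_sub
  let e := kerEquivKerOfFstSub T.toLinearEquiv (ℓ := (ℓ₀ : X →ₗ[ℝ] Y))
    (L := (L : X →ₗ[ℝ] Y × Z)) (A := ((ContinuousLinearMap.id ℝ Y - Q₀ : Y →L[ℝ] Y) : Y →ₗ[ℝ] Y))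
    hL (fun y => by simp [hQ₀, hP])
  exact ⟨e.finiteDimensional, e.finrank_eq.symm⟩

/-- If `Q₀ : Y → Y` is a compact operator, then `ker L` is a
finite-dimensional subspace of `X` and `dim ker L = dim ker (I − Q₀)`. -/
theorem stmt_4
    {X Y Z : Type*}
    [NormedAddCommGroup X] [NormedSpace ℝ X] [CompleteSpace X]
    [NormedAddCommGroup Y] [NormedSpace ℝ Y] [CompleteSpace Y]
    [NormedAddCommGroup Z] [NormedSpace ℝ Z] [CompleteSpace Z]
    (T : X ≃L[ℝ] Y × Z)
    (P : Y →L[ℝ] X) (K : Z →L[ℝ] X)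
    (hP : ∀ y : Y, P y = T.symm (y, 0))
    (hK : ∀ z : Z, K z = T.symm (0, z))
    (ℓ₀ : X →L[ℝ] Y)
    (Q₀ : Y →L[ℝ] Y) (hQ₀ : ∀ y : Y, Q₀ y = ℓ₀ (P y))
    (L : X →L[ℝ] Y × Z)
    (hL : ∀ u : X, L u = ((T u).1 - ℓ₀ u, (T u).2))
    (hcomp : IsCompactOperator ⇑Q₀) :
    FiniteDimensional ℝ (LinearMap.ker (L : X →ₗ[ℝ] Y × Z)) ∧
    Module.finrank ℝ (LinearMap.ker (L : X →ₗ[ℝ] Y × Z)) =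
      Module.finrank ℝ (LinearMap.ker ((ContinuousLinearMap.id ℝ Y - Q₀ : Y →L[ℝ] Y) : Y →ₗ[ℝ] Y)) :=
  stmt_4_general T P hP ℓ₀ Q₀ hQ₀ L hL hcomp
end

section
/- If Q₀ : Y → Y is a compact operator, then the range of L is a closed subspace of Y × Z. -/
/-!
Writing `u = T⁻¹ (y, z) = P y + K z` gives `L u = ((1 - Q₀) y - ℓ₀ (K z), z)`, so the range of
`L` is the preimage of the range of `1 - Q₀` under the continuous map `(w, z) ↦ w + ℓ₀ (K z)`.
It remains to see that `1 - Q` has closed range for compact `Q` (Riesz): its kernel is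
finite-dimensional, hence has a closed complement `M`, and `1 - Q` is bounded below on `M`,
since otherwise compactness of `Q` produces a unit vector of `M` in the kernel.
-/

open Filter Topology

namespace IsCompactOperator

section NontriviallyNormedField

variable {𝕜 E : Type*} [NontriviallyNormedField 𝕜] [NormedAddCommGroup E] [NormedSpace 𝕜 E]
  {Q : E →L[𝕜] E}

theorem exists_tendsto_subseq_of_tendsto_sub (hQ : IsCompactOperator Q) {x : ℕ → E} {R : ℝ}
    (hx : ∀ n, ‖x n‖ ≤ R) {w : E} (hw : Tendsto (fun n ↦ x n - Q (x n)) atTop (𝓝 w)) :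
    ∃ y, ∃ φ : ℕ → ℕ, StrictMono φ ∧ Tendsto (x ∘ φ) atTop (𝓝 y) ∧ y - Q y = w := by
  obtain ⟨C, hC, hQC⟩ := hQ.image_closedBall_subset_compact R
  obtain ⟨q, -, φ, hφ, hq⟩ := hC.tendsto_subseq fun n ↦ hQC ⟨x n, by simpa using hx n, rfl⟩
  have hwφ := hw.comp hφ.tendsto_atTop
  have hxφ : Tendsto (x ∘ φ) atTop (𝓝 (w + q)) := by
    simpa [Function.comp_def] using hwφ.add hq
  exact ⟨w + q, φ, hφ, hxφ,
    tendsto_nhds_unique (((continuous_id.sub Q.continuous).tendsto _).comp hxφ) hwφ⟩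

theorem finiteDimensional_ker_one_sub [CompleteSpace 𝕜] (hQ : IsCompactOperator Q) :
    FiniteDimensional 𝕜 ((1 - Q : E →L[𝕜] E).ker) := by
  have hfix : ∀ x ∈ (1 - Q : E →L[𝕜] E).ker, Q x = x := fun x hx ↦
    (sub_eq_zero.1 (by simpa [sub_apply] using hx)).symm
  have hmaps : ∀ x ∈ (1 - Q : E →L[𝕜] E).ker, Q x ∈ (1 - Q : E →L[𝕜] E).ker :=
    fun x hx ↦ (hfix x hx).symm ▸ hx
  have hid : ⇑((Q : E →ₗ[𝕜] E).restrict hmaps) = id := funext fun x ↦ Subtype.ext (hfix x x.2)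
  exact .of_isCompactOperator_id (hid ▸ hQ.restrict hmaps (ContinuousLinearMap.isClosed_ker _))

end NontriviallyNormedField

section RCLike

variable {𝕜 E : Type*} [RCLike 𝕜] [NormedAddCommGroup E] [NormedSpace 𝕜 E] {Q : E →L[𝕜] E}

theorem exists_pos_mul_norm_le_norm_sub (hQ : IsCompactOperator Q) {M : Submodule 𝕜 E}
    (hM : IsClosed (M : Set E)) (hMker : Disjoint M ((1 - Q : E →L[𝕜] E).ker)) :
    ∃ c > 0, ∀ x ∈ M, c * ‖x‖ ≤ ‖x - Q x‖ := by
  by_contra! h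
  have (n : ℕ) : ∃ u ∈ M, ‖u‖ = 1 ∧ ‖u - Q u‖ < 1 / (n + 1) := by
    obtain ⟨x, hxM, hx⟩ := h (1 / (n + 1)) (by positivity)
    have hx0 : x ≠ 0 := by rintro rfl; simp at hx
    refine ⟨(‖x‖⁻¹ : 𝕜) • x, M.smul_mem _ hxM, norm_smul_inv_norm hx0, ?_⟩
    calc ‖(‖x‖⁻¹ : 𝕜) • x - Q ((‖x‖⁻¹ : 𝕜) • x)‖ = ‖x‖⁻¹ * ‖x - Q x‖ := by
          rw [map_smul, ← smul_sub, norm_smul, norm_inv, RCLike.norm_ofReal, abs_norm]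
      _ < 1 / (n + 1) := by
          rw [inv_mul_lt_iff₀ (norm_pos_iff.2 hx0), mul_comm]
          exact hx
  choose u huM hu_norm hu_sub using this
  have hlim : Tendsto (fun n ↦ u n - Q (u n)) atTop (𝓝 0) :=
    squeeze_zero_norm (fun n ↦ (hu_sub n).le) tendsto_one_div_add_atTop_nhds_zero_nat
  obtain ⟨y, φ, -, hy, hyQ⟩ :=
    hQ.exists_tendsto_subseq_of_tendsto_sub (fun n ↦ (hu_norm n).le) hlim
  have hyM : y ∈ M := hM.mem_of_tendsto hy (Eventually.of_forall fun n ↦ huM (φ n))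
  have hy_norm : ‖y‖ = 1 := tendsto_nhds_unique hy.norm (by simp [hu_norm])
  have hy_ker : y ∈ (1 - Q : E →L[𝕜] E).ker := by simpa [sub_apply] using hyQ
  have hy0 : y = 0 := (Submodule.disjoint_def.1 hMker) y hyM hy_ker
  simp [hy0] at hy_norm

theorem isClosed_range_one_sub [CompleteSpace E] (hQ : IsCompactOperator Q) :
    IsClosed (Set.range (1 - Q : E →L[𝕜] E)) := by
  have := hQ.finiteDimensional_ker_one_sub
  obtain ⟨M, hM, hcompl⟩ := (Submodule.ClosedComplemented.of_finiteDimensional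
    (1 - Q : E →L[𝕜] E).ker).exists_isClosed_isCompl
  obtain ⟨c, hc, hbound⟩ := hQ.exists_pos_mul_norm_le_norm_sub hM hcompl.disjoint.symm
  have : CompleteSpace M := hM.completeSpace_coe
  obtain ⟨K, hK⟩ : ∃ K, AntilipschitzWith K ((1 - Q).comp M.subtypeL) :=
    antilipschitzWith_iff_exists_mul_le_norm.2 ⟨c, hc, fun x ↦ by simpa using hbound x x.2⟩
  have hrange : Set.range ((1 - Q).comp M.subtypeL) = Set.range (1 - Q : E →L[𝕜] E) := by
    have h := congrArg SetLike.coe (Submodule.map_eq_range_iff.2 hcompl.codisjoint.symm)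
    rw [Submodule.map_coe, LinearMap.coe_range] at h
    rw [ContinuousLinearMap.coe_comp, Set.range_comp, Submodule.coe_subtypeL,
      Submodule.coe_subtype, Subtype.range_coe]
    exact h
  exact hrange ▸ hK.isClosed_range (ContinuousLinearMap.uniformContinuous _)

end RCLike

end IsCompactOperator

theorem ContinuousLinearMap.isClosed_range_sub_prod {𝕜 Y Z W : Type*} [NontriviallyNormedField 𝕜]
    [NormedAddCommGroup Y] [NormedSpace 𝕜 Y] [NormedAddCommGroup Z] [NormedSpace 𝕜 Z]
    [NormedAddCommGroup W] [NormedSpace 𝕜 W] {S : Y →L[𝕜] W} (hS : IsClosed (Set.range S))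
    (B : Z →L[𝕜] W) : IsClosed (Set.range fun p : Y × Z ↦ (S p.1 - B p.2, p.2)) := by
  have hpre : (Set.range fun p : Y × Z ↦ (S p.1 - B p.2, p.2)) =
      (fun q : W × Z ↦ q.1 + B q.2) ⁻¹' Set.range S := by
    ext ⟨w, z⟩
    constructor
    · rintro ⟨⟨y, z⟩, hyz⟩
      obtain ⟨rfl, rfl⟩ := Prod.mk.inj hyz
      exact ⟨y, by simp⟩
    · rintro ⟨y, hy⟩
      exact ⟨(y, z), by simp [hy]⟩
  rw [hpre]
  exact hS.preimage (by fun_prop)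

theorem stmt_5_general
    {X Y Z : Type*}
    [NormedAddCommGroup X] [NormedSpace ℝ X]
    [NormedAddCommGroup Y] [NormedSpace ℝ Y] [CompleteSpace Y]
    [NormedAddCommGroup Z] [NormedSpace ℝ Z]
    (T : X ≃L[ℝ] Y × Z)
    (P : Y →L[ℝ] X) (K : Z →L[ℝ] X)
    (hP : ∀ y : Y, P y = T.symm (y, 0))
    (hK : ∀ z : Z, K z = T.symm (0, z))
    (ℓ₀ : X →L[ℝ] Y)
    (Q₀ : Y →L[ℝ] Y) (hQ₀ : ∀ y : Y, Q₀ y = ℓ₀ (P y))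
    (L : X →L[ℝ] Y × Z)
    (hL : ∀ u : X, L u = ((T u).1 - ℓ₀ u, (T u).2))
    (hcomp : IsCompactOperator ⇑Q₀) :
    IsClosed (LinearMap.range (L : X →ₗ[ℝ] Y × Z) : Set (Y × Z)) := by
  have hLT (p : Y × Z) : L (T.symm p) = ((1 - Q₀) p.1 - ℓ₀ (K p.2), p.2) := by
    have hsplit : T.symm p = P p.1 + K p.2 := by simp [hP, hK, ← map_add]
    rw [hL, T.apply_symm_apply, hsplit, map_add, ← hQ₀]
    simp [sub_sub]
  have hrange : Set.range L = Set.range fun p : Y × Z ↦ ((1 - Q₀) p.1 - ℓ₀ (K p.2), p.2) := by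
    rw [← T.symm.surjective.range_comp]
    exact congrArg Set.range (funext hLT)
  rw [LinearMap.coe_range, ContinuousLinearMap.coe_coe, hrange]
  exact ContinuousLinearMap.isClosed_range_sub_prod hcomp.isClosed_range_one_sub (ℓ₀.comp K)

/-- If `Q₀ : Y → Y` is a compact operator, then the range of `L` is a
closed subspace of `Y × Z`. -/
theorem stmt_5
    {X Y Z : Type*}
    [NormedAddCommGroup X] [NormedSpace ℝ X] [CompleteSpace X]
    [NormedAddCommGroup Y] [NormedSpace ℝ Y] [CompleteSpace Y]
    [NormedAddCommGroup Z] [NormedSpace ℝ Z] [CompleteSpace Z]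
    (T : X ≃L[ℝ] Y × Z)
    (P : Y →L[ℝ] X) (K : Z →L[ℝ] X)
    (hP : ∀ y : Y, P y = T.symm (y, 0))
    (hK : ∀ z : Z, K z = T.symm (0, z))
    (ℓ₀ : X →L[ℝ] Y)
    (Q₀ : Y →L[ℝ] Y) (hQ₀ : ∀ y : Y, Q₀ y = ℓ₀ (P y))
    (L : X →L[ℝ] Y × Z)
    (hL : ∀ u : X, L u = ((T u).1 - ℓ₀ u, (T u).2))
    (hcomp : IsCompactOperator ⇑Q₀) :
    IsClosed (LinearMap.range (L : X →ₗ[ℝ] Y × Z) : Set (Y × Z)) :=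
  stmt_5_general T P K hP hK ℓ₀ Q₀ hQ₀ L hL hcomp
end

section
/- Assume Q₀ is compact, set M := range(I − Q₀), and let P_M : Y → Y be any continuous linear projection with range M (such a projection exists since M is closed of finite codimension). Define P_r : Y × Z → Y × Z by P_r(h₁, h₂) := (P_M h₁ − (I − P_M)(ℓ₀(K h₂)), h₂). Then P_r is a continuous linear projection (P_r ∘ P_r = P_r) whose range equals range L, and range(I − P_r) = ker P_M × {0}; consequently Y × Z decomposes as the direct sum of range L and ker P_M × {0}, and the codimension of range L in Y × Z equals dim ker P_M = dim ker(I − Q₀). -/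
/-
`L ∘ T⁻¹` sends `(y, z)` to `((I - Q₀) y - ℓ₀ (K z), z)` and `P_r` sends `(y - ℓ₀ (K z), z)` to
`(P_M y - ℓ₀ (K z), z)`. Both are shears of `B × id` (with `B = I - Q₀`, resp. `B = P_M`), so both
ranges are `{(h₁, h₂) | h₁ + ℓ₀ (K h₂) ∈ range B}`, and `range P_M = range (I - Q₀)` makes them
equal. Everything else is linear algebra of the idempotent `P_r`, except that
`dim ker P_M = codim range (I - Q₀)` must equal `dim ker (I - Q₀)`: the Riesz–Schauder theorem
that `I - Q₀` has index zero. For it, pick `f : N → W` injective or surjective, where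
`N = ker (I - Q₀)` and `W` is an algebraic complement of the range. The finite-rank correction
`I - Q₀ + f ∘ π`, with `π` a continuous projection onto `N`, is still a compact perturbation of
the identity; it is injective iff `f` is and surjective iff `f` is, and for compact perturbations
of the identity injectivity and surjectivity are equivalent. So `f` is an isomorphism `N ≃ W`.
-/

theorem LinearMap.exists_injective_or_surjective {K : Type*} {V : Type u} {W : Type v}
    [DivisionRing K] [AddCommGroup V] [Module K V] [AddCommGroup W] [Module K W] :
    ∃ f : V →ₗ[K] W, Function.Injective f ∨ Function.Surjective f := by
  rcases le_total (Cardinal.lift.{v} (Module.rank K V)) (Cardinal.lift.{u} (Module.rank K W))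
    with h | h
  · obtain ⟨f, hf⟩ := lift_rank_le_iff_exists_linearMap.1 h
    exact ⟨f, .inl hf⟩
  · obtain ⟨g, hg⟩ := lift_rank_le_iff_exists_linearMap.1 h
    obtain ⟨f, hfg⟩ := g.exists_leftInverse_of_injective (LinearMap.ker_eq_bot.2 hg)
    exact ⟨f, .inr fun w => ⟨g w, LinearMap.congr_fun hfg w⟩⟩

namespace LinearMap

section KerCorrection

variable {R E F : Type*} [Ring R] [AddCommGroup E] [Module R E] [AddCommGroup F] [Module R F]
  {A : E →ₗ[R] F} {π : E →ₗ[R] ker A} {W : Submodule R F}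

theorem injective_add_subtype_comp_comp_iff (hπ : ∀ x : ker A, π x = x)
    (hW : Disjoint (range A) W) (f : ker A →ₗ[R] W) :
    Function.Injective (A + W.subtype ∘ₗ f ∘ₗ π) ↔ Function.Injective f := by
  have hS : ∀ x : ker A, (A + W.subtype ∘ₗ f ∘ₗ π) x = f x := fun x => by simp [hπ]
  refine ⟨fun h a b hab => Subtype.ext (h (by simp only [hS, hab])), fun hf => ?_⟩
  refine (injective_iff_map_eq_zero _).2 fun x hx => ?_
  have hsum : A x + (f (π x) : F) = 0 := hx
  have hAx : A x = 0 := Submodule.disjoint_def.1 hW _ (mem_range_self A x)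
    (eq_neg_of_add_eq_zero_left hsum ▸ neg_mem (f (π x)).2)
  have hπx : π x = 0 := hf (Subtype.ext (by simpa [hAx] using hsum))
  simpa using congrArg Subtype.val ((hπ ⟨x, hAx⟩).symm.trans hπx)

theorem surjective_add_subtype_comp_comp_iff (hπ : ∀ x : ker A, π x = x)
    (hW : IsCompl (range A) W) (f : ker A →ₗ[R] W) :
    Function.Surjective (A + W.subtype ∘ₗ f ∘ₗ π) ↔ Function.Surjective f := by
  constructor
  · intro h w
    obtain ⟨x, hx⟩ := h w
    have hsum : A x + (f (π x) : F) = w := hx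
    have hAx : A x = 0 := Submodule.disjoint_def.1 hW.disjoint _ (mem_range_self A x)
      (eq_sub_of_add_eq hsum ▸ sub_mem w.2 (f (π x)).2)
    exact ⟨π x, Subtype.ext (by simpa [hAx] using hsum)⟩
  · intro hf y
    obtain ⟨r, ⟨x, rfl⟩, w, hw, rfl⟩ :=
      Submodule.mem_sup.1 (hW.sup_eq_top ▸ Submodule.mem_top (x := y))
    obtain ⟨a, ha⟩ := hf ⟨w, hw⟩
    exact ⟨x - π x + a, by simp [hπ, ha]⟩

end KerCorrection

end LinearMap

namespace IsCompactOperator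

section NontriviallyNormedField

variable {𝕜 X : Type*} [NontriviallyNormedField 𝕜] [NormedAddCommGroup X] [NormedSpace 𝕜 X]
  [CompleteSpace X] {C : X →L[𝕜] X}

theorem finiteDimensional_ker_id_sub_s6 [CompleteSpace 𝕜] (hC : IsCompactOperator C) :
    FiniteDimensional 𝕜
      (LinearMap.ker ((ContinuousLinearMap.id 𝕜 X - C : X →L[𝕜] X) : X →ₗ[𝕜] X)) := by
  set V := LinearMap.ker ((ContinuousLinearMap.id 𝕜 X - C : X →L[𝕜] X) : X →ₗ[𝕜] X)
  have hfix : ∀ v ∈ V, C v = v := fun v hv => (sub_eq_zero.mp hv).symm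
  have : CompleteSpace V := (ContinuousLinearMap.isClosed_ker _).completeSpace_coe
  have hV := (hC : IsCompactOperator (C : X →ₗ[𝕜] X)).restrict' (V := V)
    fun v hv => (hfix v hv).symm ▸ hv
  have hid : ⇑((C : X →ₗ[𝕜] X).restrict fun v hv => (hfix v hv).symm ▸ hv) = id :=
    funext fun v => Subtype.ext (hfix v v.2)
  exact FiniteDimensional.of_isCompactOperator_id (hid ▸ hV)

theorem surjective_id_sub_of_injective (hC : IsCompactOperator C)
    (hinj : Function.Injective (ContinuousLinearMap.id 𝕜 X - C)) :
    Function.Surjective (ContinuousLinearMap.id 𝕜 X - C) := by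
  rcases hC.hasEigenvalue_or_mem_resolventSet one_ne_zero with heig | hres
  · obtain ⟨x, hx, hx0⟩ := heig.exists_hasEigenvector
    refine absurd (hinj ?_) hx0
    simpa [sub_eq_zero] using (Module.End.mem_genEigenspace_one.mp hx).symm
  · rw [spectrum.mem_resolventSet_iff, map_one, ContinuousLinearMap.isUnit_iff_bijective] at hres
    exact hres.2

end NontriviallyNormedField

section RCLike

variable {𝕜 X : Type*} [RCLike 𝕜] [NormedAddCommGroup X] [NormedSpace 𝕜 X]
  [CompleteSpace X] {C : X →L[𝕜] X}

/- A continuous right inverse `G` of `I - C`, vanishing on a complement of the kernel, satisfies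
`G = I + C G`; so `G` is surjective as well, which leaves no room for a kernel. -/
theorem injective_id_sub_of_surjective (hC : IsCompactOperator C)
    (hsurj : Function.Surjective (ContinuousLinearMap.id 𝕜 X - C)) :
    Function.Injective (ContinuousLinearMap.id 𝕜 X - C) := by
  set A : X →L[𝕜] X := ContinuousLinearMap.id 𝕜 X - C
  have := hC.finiteDimensional_ker_id_sub_s6
  obtain ⟨π, hπ⟩ :=
    Submodule.ClosedComplemented.of_finiteDimensional (LinearMap.ker (A : X →ₗ[𝕜] X))
  let e := A.equivProdOfSurjectiveOfIsCompl π (LinearMap.range_eq_top.2 hsurj)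
    (LinearMap.range_eq_top.2 fun x => ⟨x, hπ x⟩) (LinearMap.isCompl_of_proj hπ)
  let G : X →L[𝕜] X := e.symm.toContinuousLinearMap ∘L ContinuousLinearMap.inl 𝕜 X _
  have hAG : ∀ y, A (G y) = y := fun y => congrArg Prod.fst (e.apply_symm_apply (y, 0))
  have hπG : ∀ y, π (G y) = 0 := fun y => congrArg Prod.snd (e.apply_symm_apply (y, 0))
  have hG : G = ContinuousLinearMap.id 𝕜 X - -(C ∘L G) := by
    ext y
    calc G y = A (G y) + C (G y) := by simp [A]
      _ = _ := by simp [hAG]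
  have hGinj : Function.Injective G := fun a b h => by simpa [hAG] using congrArg A h
  have hGsurj : Function.Surjective G :=
    hG ▸ surjective_id_sub_of_injective (hC.comp_clm G).neg (hG ▸ hGinj)
  refine (injective_iff_map_eq_zero A).2 fun x hx => ?_
  obtain ⟨y, rfl⟩ := hGsurj x
  exact congrArg Subtype.val ((hπ ⟨G y, hx⟩).symm.trans (hπG y))

theorem rank_ker_id_sub_eq_rank_quotient_range (hC : IsCompactOperator C) :
    Module.rank 𝕜 (LinearMap.ker ((ContinuousLinearMap.id 𝕜 X - C : X →L[𝕜] X) : X →ₗ[𝕜] X)) =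
      Module.rank 𝕜
        (X ⧸ LinearMap.range ((ContinuousLinearMap.id 𝕜 X - C : X →L[𝕜] X) : X →ₗ[𝕜] X)) := by
  set A : X →L[𝕜] X := ContinuousLinearMap.id 𝕜 X - C
  have := hC.finiteDimensional_ker_id_sub_s6
  obtain ⟨π, hπ⟩ :=
    Submodule.ClosedComplemented.of_finiteDimensional (LinearMap.ker (A : X →ₗ[𝕜] X))
  obtain ⟨W, hW⟩ := (LinearMap.range (A : X →ₗ[𝕜] X)).exists_isCompl
  obtain ⟨f, hf⟩ := LinearMap.exists_injective_or_surjective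
    (K := 𝕜) (V := LinearMap.ker (A : X →ₗ[𝕜] X)) (W := W)
  let F : X →L[𝕜] X := (W.subtype ∘ₗ f).toContinuousLinearMap ∘L π
  have hF : IsCompactOperator F :=
    ((isCompactOperator_id_iff_finiteDimensional.2 this).continuous_comp
      (W.subtype ∘ₗ f).toContinuousLinearMap.continuous).comp_clm π
  have hS : ((ContinuousLinearMap.id 𝕜 X - (C - F) : X →L[𝕜] X) : X →ₗ[𝕜] X) =
      (A : X →ₗ[𝕜] X) + W.subtype ∘ₗ f ∘ₗ (π : X →ₗ[𝕜] _) := by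
    ext x
    simp only [ContinuousLinearMap.toLinearMap_sub, ContinuousLinearMap.coe_id,
      LinearMap.sub_apply, LinearMap.id_coe, id_eq, ContinuousLinearMap.coe_coe,
      LinearMap.add_apply, LinearMap.coe_comp, Submodule.coe_subtype, Function.comp_apply, F, A]
    abel
  have hSinj := LinearMap.injective_add_subtype_comp_comp_iff hπ hW.disjoint f
  have hSsurj := LinearMap.surjective_add_subtype_comp_comp_iff hπ hW f
  rw [← hS] at hSinj hSsurj
  have hfbij : Function.Bijective f := by
    rcases hf with hf | hf
    · exact ⟨hf, hSsurj.1 (surjective_id_sub_of_injective (hC.sub hF) (hSinj.2 hf))⟩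
    · exact ⟨hSinj.1 (injective_id_sub_of_surjective (hC.sub hF) (hSsurj.2 hf)), hf⟩
  rw [(LinearEquiv.ofBijective f hfbij).rank_eq,
    (Submodule.quotientEquivOfIsCompl _ _ hW).rank_eq]

end RCLike

end IsCompactOperator

theorem Set.mem_range_iff_add_mem_range_of_shear {E Y Z : Type*} [AddCommGroup Y]
    {Φ : E → Y × Z} {e : Y × Z → E} (he : Function.Surjective e) {B : Y → Y} {g : Z → Y}
    (hΦ : ∀ y z, Φ (e (y, z)) = (B y - g z, z)) (p : Y × Z) :
    p ∈ Set.range Φ ↔ p.1 + g p.2 ∈ Set.range B := by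
  rw [← he.range_comp]
  constructor
  · rintro ⟨⟨y, z⟩, rfl⟩
    exact ⟨y, by simp [hΦ]⟩
  · rintro ⟨y, hy⟩
    exact ⟨(y, p.2), by simp [hΦ, hy]⟩

namespace LinearMap

section Shear

variable {R Y Z : Type*} [Ring R] [AddCommGroup Y] [Module R Y] [AddCommGroup Z] [Module R Z]
  {P_M : Y →ₗ[R] Y} {g : Z →ₗ[R] Y} {P_r : Y × Z →ₗ[R] Y × Z}

theorem isIdempotentElem_of_apply_eq_sub (hPM : IsIdempotentElem P_M)
    (hPr : ∀ p, P_r p = (P_M p.1 - (g p.2 - P_M (g p.2)), p.2)) : IsIdempotentElem P_r := by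
  have hPM' : ∀ y, P_M (P_M y) = P_M y := LinearMap.congr_fun hPM
  ext p <;> simp [hPr, hPM']

theorem ker_eq_prod_bot_of_apply_eq_sub
    (hPr : ∀ p, P_r p = (P_M p.1 - (g p.2 - P_M (g p.2)), p.2)) :
    ker P_r = (ker P_M).prod ⊥ := by
  ext ⟨y, z⟩
  simp only [mem_ker, hPr, Submodule.mem_prod, Submodule.mem_bot, Prod.mk_eq_zero]
  constructor
  · rintro ⟨h, rfl⟩
    simpa using h
  · rintro ⟨h, rfl⟩
    simpa using h

theorem mem_range_iff_of_apply_eq_sub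
    (hPr : ∀ p, P_r p = (P_M p.1 - (g p.2 - P_M (g p.2)), p.2)) (p : Y × Z) :
    p ∈ range P_r ↔ p.1 + g p.2 ∈ range P_M :=
  Set.mem_range_iff_add_mem_range_of_shear (e := fun q => (q.1 - g q.2, q.2))
    (fun q => ⟨(q.1 + g q.2, q.2), by simp⟩) (fun y z => by simp [hPr]) p

end Shear

end LinearMap

theorem Submodule.rank_quotient_eq_lift_rank_of_isCompl_prod_bot {R : Type*} {M : Type v}
    {N : Type w} [Ring R] [AddCommGroup M] [Module R M] [AddCommGroup N] [Module R N]
    {p : Submodule R (M × N)} {q : Submodule R M} (h : IsCompl p (q.prod ⊥)) :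
    Module.rank R ((M × N) ⧸ p) = Cardinal.lift.{w} (Module.rank R q) := by
  let e := (p.quotientEquivOfIsCompl _ h).trans ((LinearEquiv.ofEq _ _ (map_inl q).symm).trans
    (equivMapOfInjective _ (LinearMap.inl_injective (R := R) (M := M) (M₂ := N)) q).symm)
  apply Cardinal.lift_injective.{v}
  rw [e.lift_rank_eq, Cardinal.lift_lift, Cardinal.lift_umax]

theorem mem_range_iff_add_mem_range_id_sub {R X Y Z : Type*} [Ring R]
    [AddCommGroup X] [Module R X] [AddCommGroup Y] [Module R Y] [AddCommGroup Z] [Module R Z]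
    (T : X ≃ₗ[R] Y × Z) {P : Y →ₗ[R] X} {K : Z →ₗ[R] X}
    (hP : ∀ y : Y, P y = T.symm (y, 0)) (hK : ∀ z : Z, K z = T.symm (0, z))
    {ℓ₀ : X →ₗ[R] Y} {Q₀ : Y →ₗ[R] Y} (hQ₀ : ∀ y : Y, Q₀ y = ℓ₀ (P y))
    {L : X →ₗ[R] Y × Z} (hL : ∀ u : X, L u = ((T u).1 - ℓ₀ u, (T u).2)) (p : Y × Z) :
    p ∈ LinearMap.range L ↔ p.1 + ℓ₀ (K p.2) ∈ LinearMap.range (LinearMap.id - Q₀) := by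
  have hsymm : ∀ y z, T.symm (y, z) = P y + K z := fun y z => by
    rw [hP, hK, ← map_add, Prod.mk_add_mk, add_zero, zero_add]
  refine Set.mem_range_iff_add_mem_range_of_shear (Φ := ⇑L)
    (B := ⇑(LinearMap.id - Q₀ : Y →ₗ[R] Y)) (g := fun z => ℓ₀ (K z))
    T.symm.surjective (fun y z => ?_) p
  rw [hL, T.apply_symm_apply, hsymm, map_add, ← hQ₀, sub_add_eq_sub_sub]
  rfl

theorem stmt_6_general
    {X : Type u} {Y : Type v} {Z : Type w}
    [NormedAddCommGroup X] [NormedSpace ℝ X]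
    [NormedAddCommGroup Y] [NormedSpace ℝ Y] [CompleteSpace Y]
    [NormedAddCommGroup Z] [NormedSpace ℝ Z]
    (T : X ≃L[ℝ] Y × Z)
    (P : Y →L[ℝ] X) (K : Z →L[ℝ] X)
    (hP : ∀ y : Y, P y = T.symm (y, 0))
    (hK : ∀ z : Z, K z = T.symm (0, z))
    (ℓ₀ : X →L[ℝ] Y)
    (Q₀ : Y →L[ℝ] Y) (hQ₀ : ∀ y : Y, Q₀ y = ℓ₀ (P y))
    (L : X →L[ℝ] Y × Z)
    (hL : ∀ u : X, L u = ((T u).1 - ℓ₀ u, (T u).2))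
    (hcomp : IsCompactOperator ⇑Q₀)
    (P_M : Y →L[ℝ] Y)
    (hPMidem : ∀ y : Y, P_M (P_M y) = P_M y)
    (hPMrange : LinearMap.range (P_M : Y →ₗ[ℝ] Y) =
      LinearMap.range ((ContinuousLinearMap.id ℝ Y - Q₀ : Y →L[ℝ] Y) : Y →ₗ[ℝ] Y))
    (P_r : Y × Z →L[ℝ] Y × Z)
    (hPr : ∀ p : Y × Z,
      P_r p = (P_M p.1 - (ℓ₀ (K p.2) - P_M (ℓ₀ (K p.2))), p.2)) :
    (∀ p : Y × Z, P_r (P_r p) = P_r p) ∧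
    LinearMap.range (P_r : Y × Z →ₗ[ℝ] Y × Z) = LinearMap.range (L : X →ₗ[ℝ] Y × Z) ∧
    LinearMap.range ((ContinuousLinearMap.id ℝ (Y × Z) - P_r : Y × Z →L[ℝ] Y × Z) : Y × Z →ₗ[ℝ] Y × Z) =
      (LinearMap.ker (P_M : Y →ₗ[ℝ] Y)).prod (⊥ : Submodule ℝ Z) ∧
    IsCompl (LinearMap.range (L : X →ₗ[ℝ] Y × Z)) ((LinearMap.ker (P_M : Y →ₗ[ℝ] Y)).prod (⊥ : Submodule ℝ Z)) ∧
    Module.rank ℝ ((Y × Z) ⧸ LinearMap.range (L : X →ₗ[ℝ] Y × Z)) =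
      Cardinal.lift.{w} (Module.rank ℝ (LinearMap.ker (P_M : Y →ₗ[ℝ] Y))) ∧
    Module.rank ℝ (LinearMap.ker (P_M : Y →ₗ[ℝ] Y)) =
      Module.rank ℝ (LinearMap.ker ((ContinuousLinearMap.id ℝ Y - Q₀ : Y →L[ℝ] Y) : Y →ₗ[ℝ] Y)) := by
  have hPM : IsIdempotentElem (P_M : Y →ₗ[ℝ] Y) := LinearMap.ext hPMidem
  have hPr' : ∀ p : Y × Z, (P_r : Y × Z →ₗ[ℝ] Y × Z) p =
      (P_M p.1 - ((ℓ₀ ∘L K : Z →L[ℝ] Y) p.2 - P_M ((ℓ₀ ∘L K : Z →L[ℝ] Y) p.2)), p.2) := hPr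
  have hidem := LinearMap.isIdempotentElem_of_apply_eq_sub hPM hPr'
  have hker := LinearMap.ker_eq_prod_bot_of_apply_eq_sub hPr'
  have hrange :
      LinearMap.range (P_r : Y × Z →ₗ[ℝ] Y × Z) = LinearMap.range (L : X →ₗ[ℝ] Y × Z) := by
    ext p
    rw [LinearMap.mem_range_iff_of_apply_eq_sub hPr', hPMrange,
      mem_range_iff_add_mem_range_id_sub T.toLinearEquiv hP hK hQ₀ hL]
    rfl
  have hcompl : IsCompl (LinearMap.range (L : X →ₗ[ℝ] Y × Z))
      ((LinearMap.ker (P_M : Y →ₗ[ℝ] Y)).prod ⊥) :=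
    hrange ▸ hker ▸ LinearMap.IsIdempotentElem.isCompl hidem
  refine ⟨LinearMap.congr_fun hidem, hrange,
    hker ▸ (LinearMap.IsIdempotentElem.ker_eq_range hidem).symm, hcompl, ?_, ?_⟩
  · exact Submodule.rank_quotient_eq_lift_rank_of_isCompl_prod_bot hcompl
  · rw [← (Submodule.quotientEquivOfIsCompl _ _ (LinearMap.IsIdempotentElem.isCompl hPM)).rank_eq,
      hPMrange, hcomp.rank_ker_id_sub_eq_rank_quotient_range]

/-- With `Q₀` compact, `M := range (I − Q₀)` and `P_M : Y → Y` any continuous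
linear projection with range `M`, the map `P_r (h₁, h₂) := (P_M h₁ − (I − P_M)(ℓ₀ (K h₂)), h₂)`
is a continuous linear projection with range equal to `range L`, and
`range (I − P_r) = ker P_M × {0}`; consequently `Y × Z = range L ⊕ (ker P_M × {0})` and
`codim (range L) = dim ker P_M = dim ker (I − Q₀)`. -/
theorem stmt_6
    {X : Type u} {Y : Type v} {Z : Type w}
    [NormedAddCommGroup X] [NormedSpace ℝ X] [CompleteSpace X]
    [NormedAddCommGroup Y] [NormedSpace ℝ Y] [CompleteSpace Y]
    [NormedAddCommGroup Z] [NormedSpace ℝ Z] [CompleteSpace Z]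
    (T : X ≃L[ℝ] Y × Z)
    (P : Y →L[ℝ] X) (K : Z →L[ℝ] X)
    (hP : ∀ y : Y, P y = T.symm (y, 0))
    (hK : ∀ z : Z, K z = T.symm (0, z))
    (ℓ₀ : X →L[ℝ] Y)
    (Q₀ : Y →L[ℝ] Y) (hQ₀ : ∀ y : Y, Q₀ y = ℓ₀ (P y))
    (L : X →L[ℝ] Y × Z)
    (hL : ∀ u : X, L u = ((T u).1 - ℓ₀ u, (T u).2))
    (hcomp : IsCompactOperator ⇑Q₀)
    (P_M : Y →L[ℝ] Y)
    (hPMidem : ∀ y : Y, P_M (P_M y) = P_M y)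
    (hPMrange : LinearMap.range (P_M : Y →ₗ[ℝ] Y) =
      LinearMap.range ((ContinuousLinearMap.id ℝ Y - Q₀ : Y →L[ℝ] Y) : Y →ₗ[ℝ] Y))
    (P_r : Y × Z →L[ℝ] Y × Z)
    (hPr : ∀ p : Y × Z,
      P_r p = (P_M p.1 - (ℓ₀ (K p.2) - P_M (ℓ₀ (K p.2))), p.2)) :
    (∀ p : Y × Z, P_r (P_r p) = P_r p) ∧
    LinearMap.range (P_r : Y × Z →ₗ[ℝ] Y × Z) = LinearMap.range (L : X →ₗ[ℝ] Y × Z) ∧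
    LinearMap.range ((ContinuousLinearMap.id ℝ (Y × Z) - P_r : Y × Z →L[ℝ] Y × Z) : Y × Z →ₗ[ℝ] Y × Z) =
      (LinearMap.ker (P_M : Y →ₗ[ℝ] Y)).prod (⊥ : Submodule ℝ Z) ∧
    IsCompl (LinearMap.range (L : X →ₗ[ℝ] Y × Z)) ((LinearMap.ker (P_M : Y →ₗ[ℝ] Y)).prod (⊥ : Submodule ℝ Z)) ∧
    Module.rank ℝ ((Y × Z) ⧸ LinearMap.range (L : X →ₗ[ℝ] Y × Z)) =
      Cardinal.lift.{w} (Module.rank ℝ (LinearMap.ker (P_M : Y →ₗ[ℝ] Y))) ∧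
    Module.rank ℝ (LinearMap.ker (P_M : Y →ₗ[ℝ] Y)) =
      Module.rank ℝ (LinearMap.ker ((ContinuousLinearMap.id ℝ Y - Q₀ : Y →L[ℝ] Y) : Y →ₗ[ℝ] Y)) :=
  stmt_6_general T P K hP hK ℓ₀ Q₀ hQ₀ L hL hcomp P_M hPMidem hPMrange P_r hPr
end

section
/- For every pair (g, h) ∈ Y × Z there exists a unique pair (ζ, w) ∈ ℝ × X such that P_k w = 0 and L w = (ζ B + g, −h). (This is the unique solvability of the bordered linear system underlying the computation of the direction of bifurcation.) -/
/-!
Writing `w = T⁻¹ (y, z)`, the system `L w = (ζ • B + g, -h)` reads `z = -h` and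
`(I - Q₀) y = ζ • B + g + ℓ₀ (T⁻¹ (0, -h))`. Choosing a functional `f` with `f B = 1`, the compact
perturbation `Q₀ + f ⊗ B` has `I - (Q₀ + f ⊗ B)` injective (because `ker (I - Q₀) = span {B}` and
`B ∉ range (I - Q₀)`), hence surjective by the Fredholm alternative; so `range (I - Q₀) + span {B}`
is everything, which gives existence. Uniqueness: `B ∉ range (I - Q₀)` pins down `ζ`, and the
condition `P_k w = 0` removes the kernel `ker L = range P_k`.
-/

theorem LinearMap.eq_zero_of_apply_eq_smul_of_notMem_range {K M N : Type*} [DivisionRing K]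
    [AddCommGroup M] [Module K M] [AddCommGroup N] [Module K N] {A : M →ₗ[K] N} {B : N}
    (hB : B ∉ LinearMap.range A) {x : M} {c : K} (hx : A x = c • B) : c = 0 := by
  by_contra hc
  exact hB ⟨c⁻¹ • x, by rw [map_smul, hx, smul_smul, inv_mul_cancel₀ hc, one_smul]⟩

theorem IsCompactOperator.surjective_id_sub {𝕜 Y : Type*} [NontriviallyNormedField 𝕜]
    [NormedAddCommGroup Y] [NormedSpace 𝕜 Y] [CompleteSpace Y] {Q : Y →L[𝕜] Y}
    (hQ : IsCompactOperator Q) (hinj : Function.Injective (ContinuousLinearMap.id 𝕜 Y - Q)) :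
    Function.Surjective (ContinuousLinearMap.id 𝕜 Y - Q) := by
  rcases hQ.hasEigenvalue_or_mem_resolventSet one_ne_zero with hEig | hRes
  · obtain ⟨x, hx⟩ := hEig.exists_hasEigenvector
    refine absurd (hinj (a₂ := 0) ?_) hx.2
    have hQx : Q x = x := by simpa using hx.apply_eq_smul
    simp [hQx]
  · rw [spectrum.mem_resolventSet_iff, ContinuousLinearMap.isUnit_iff_bijective] at hRes
    simpa using hRes.2

theorem IsCompactOperator.exists_id_sub_apply_eq_smul_add {𝕜 Y : Type*} [RCLike 𝕜]
    [NormedAddCommGroup Y] [NormedSpace 𝕜 Y] [CompleteSpace Y] {Q : Y →L[𝕜] Y}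
    (hQ : IsCompactOperator Q) {B : Y}
    (hker : LinearMap.ker ((ContinuousLinearMap.id 𝕜 Y - Q : Y →L[𝕜] Y) : Y →ₗ[𝕜] Y) =
      Submodule.span 𝕜 {B})
    (hB : B ∉ LinearMap.range ((ContinuousLinearMap.id 𝕜 Y - Q : Y →L[𝕜] Y) : Y →ₗ[𝕜] Y))
    (v : Y) : ∃ ζ : 𝕜, ∃ y : Y, y - Q y = ζ • B + v := by
  have hB0 : B ≠ 0 := by
    rintro rfl
    exact hB (Submodule.zero_mem _)
  obtain ⟨f, hfB⟩ := SeparatingDual.exists_eq_one (R := 𝕜) hB0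
  set Q' : Y →L[𝕜] Y := Q + f.smulRight B
  have hQ' : IsCompactOperator Q' :=
    hQ.add ((isCompactOperator_of_locallyCompactSpace_rng
      ((ContinuousLinearMap.id 𝕜 𝕜).smulRight B)).comp_clm f)
  have hQ'_apply (y : Y) : (ContinuousLinearMap.id 𝕜 Y - Q') y = y - Q y - f y • B := by
    simp [Q', sub_sub]
  have hinj : Function.Injective (ContinuousLinearMap.id 𝕜 Y - Q') := by
    refine (injective_iff_map_eq_zero _).2 fun y hy => ?_
    rw [hQ'_apply, sub_eq_zero] at hy
    have hfy : f y = 0 := LinearMap.eq_zero_of_apply_eq_smul_of_notMem_range hB hy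
    have hy_ker :
        y ∈ LinearMap.ker ((ContinuousLinearMap.id 𝕜 Y - Q : Y →L[𝕜] Y) : Y →ₗ[𝕜] Y) := by
      simp [hy, hfy]
    obtain ⟨a, rfl⟩ := Submodule.mem_span_singleton.1 (hker ▸ hy_ker)
    simp_all
  obtain ⟨y, hy⟩ := hQ'.surjective_id_sub hinj v
  exact ⟨f y, y, by rw [← hy, hQ'_apply]; abel⟩

section BorderedSystem

variable {𝕜 X Y Z : Type*} [RCLike 𝕜]
  [NormedAddCommGroup X] [NormedSpace 𝕜 X] [NormedAddCommGroup Y] [NormedSpace 𝕜 Y]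
  [NormedAddCommGroup Z] [NormedSpace 𝕜 Z]
  {T : X ≃L[𝕜] Y × Z} {ℓ₀ : X →L[𝕜] Y} {Q₀ : Y →L[𝕜] Y} {L : X →L[𝕜] Y × Z}
  {P_k : X →L[𝕜] X} {B : Y}

theorem apply_symm_eq_sub (hQ₀ : ∀ y, Q₀ y = ℓ₀ (T.symm (y, 0)))
    (hL : ∀ u, L u = ((T u).1 - ℓ₀ u, (T u).2)) (y : Y) (z : Z) :
    L (T.symm (y, z)) = (y - Q₀ y - ℓ₀ (T.symm (0, z)), z) := by
  have hsplit : T.symm (y, z) = T.symm (y, 0) + T.symm (0, z) := by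
    rw [← map_add, Prod.mk_add_mk, add_zero, zero_add]
  rw [hL, T.apply_symm_apply, hsplit, map_add, hQ₀, sub_sub]

theorem eq_zero_of_apply_eq_zero_of_range_eq_ker (hPk_idem : ∀ x, P_k (P_k x) = P_k x)
    (hPk_range : LinearMap.range (P_k : X →ₗ[𝕜] X) = LinearMap.ker (L : X →ₗ[𝕜] Y × Z))
    {x : X} (hPx : P_k x = 0) (hLx : L x = 0) : x = 0 := by
  obtain ⟨u, rfl⟩ := hPk_range ▸ LinearMap.mem_ker.2 hLx
  simpa [hPk_idem] using hPx

theorem eq_zero_of_bordered_eq_zero (hQ₀ : ∀ y, Q₀ y = ℓ₀ (T.symm (y, 0)))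
    (hL : ∀ u, L u = ((T u).1 - ℓ₀ u, (T u).2))
    (hB : B ∉ LinearMap.range ((ContinuousLinearMap.id 𝕜 Y - Q₀ : Y →L[𝕜] Y) : Y →ₗ[𝕜] Y))
    (hPk_idem : ∀ x, P_k (P_k x) = P_k x)
    (hPk_range : LinearMap.range (P_k : X →ₗ[𝕜] X) = LinearMap.ker (L : X →ₗ[𝕜] Y × Z))
    {c : 𝕜} {x : X} (hPx : P_k x = 0) (hLx : L x = (c • B, 0)) : c = 0 ∧ x = 0 := by
  have hc : c = 0 := by
    obtain ⟨⟨y, z⟩, rfl⟩ := T.symm.surjective x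
    rw [apply_symm_eq_sub hQ₀ hL, Prod.mk.injEq] at hLx
    obtain ⟨hy, rfl⟩ := hLx
    rw [Prod.mk_zero_zero, map_zero, map_zero, sub_zero] at hy
    exact LinearMap.eq_zero_of_apply_eq_smul_of_notMem_range hB hy
  subst hc
  exact ⟨rfl, eq_zero_of_apply_eq_zero_of_range_eq_ker hPk_idem hPk_range hPx
    (by rwa [zero_smul, Prod.mk_zero_zero] at hLx)⟩

theorem exists_bordered_solution [CompleteSpace Y] (hQ₀ : ∀ y, Q₀ y = ℓ₀ (T.symm (y, 0)))
    (hL : ∀ u, L u = ((T u).1 - ℓ₀ u, (T u).2)) (hQ₀_compact : IsCompactOperator Q₀)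
    (hker : LinearMap.ker ((ContinuousLinearMap.id 𝕜 Y - Q₀ : Y →L[𝕜] Y) : Y →ₗ[𝕜] Y) =
      Submodule.span 𝕜 {B})
    (hB : B ∉ LinearMap.range ((ContinuousLinearMap.id 𝕜 Y - Q₀ : Y →L[𝕜] Y) : Y →ₗ[𝕜] Y))
    (hPk_idem : ∀ x, P_k (P_k x) = P_k x)
    (hPk_range : LinearMap.range (P_k : X →ₗ[𝕜] X) = LinearMap.ker (L : X →ₗ[𝕜] Y × Z))
    (g : Y) (h : Z) : ∃ ζ : 𝕜, ∃ w : X, P_k w = 0 ∧ L w = (ζ • B + g, -h) := by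
  obtain ⟨ζ, y, hy⟩ :=
    hQ₀_compact.exists_id_sub_apply_eq_smul_add hker hB (g + ℓ₀ (T.symm (0, -h)))
  set w₀ := T.symm (y, -h)
  have hLw₀ : L w₀ = (ζ • B + g, -h) := by
    rw [apply_symm_eq_sub hQ₀ hL, hy, ← add_assoc, add_sub_cancel_right]
  have hLPw₀ : L (P_k w₀) = 0 :=
    LinearMap.mem_ker.1 (hPk_range ▸ LinearMap.mem_range_self (P_k : X →ₗ[𝕜] X) w₀)
  exact ⟨ζ, w₀ - P_k w₀, by simp [hPk_idem], by simp [hLw₀, hLPw₀]⟩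

end BorderedSystem

theorem stmt_8_general
    {X Y Z : Type*}
    [NormedAddCommGroup X] [NormedSpace ℝ X]
    [NormedAddCommGroup Y] [NormedSpace ℝ Y] [CompleteSpace Y]
    [NormedAddCommGroup Z] [NormedSpace ℝ Z]
    (T : X ≃L[ℝ] Y × Z)
    (P : Y →L[ℝ] X)
    (hP : ∀ y : Y, P y = T.symm (y, 0))
    (ℓ₀ : X →L[ℝ] Y)
    (Q₀ : Y →L[ℝ] Y) (hQ₀ : ∀ y : Y, Q₀ y = ℓ₀ (P y))
    (L : X →L[ℝ] Y × Z)
    (hL : ∀ u : X, L u = ((T u).1 - ℓ₀ u, (T u).2))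
    (hcomp : IsCompactOperator ⇑Q₀)
    (B : Y)
    (hBker : LinearMap.ker ((ContinuousLinearMap.id ℝ Y - Q₀ : Y →L[ℝ] Y) : Y →ₗ[ℝ] Y) = Submodule.span ℝ {B})
    (hBrange : B ∉ LinearMap.range ((ContinuousLinearMap.id ℝ Y - Q₀ : Y →L[ℝ] Y) : Y →ₗ[ℝ] Y))
    (P_k : X →L[ℝ] X)
    (hPkidem : ∀ x : X, P_k (P_k x) = P_k x)
    (hPkrange : LinearMap.range (P_k : X →ₗ[ℝ] X) = LinearMap.ker (L : X →ₗ[ℝ] Y × Z)) :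
    ∀ (g : Y) (h : Z),
      ∃! p : ℝ × X, P_k p.2 = 0 ∧ L p.2 = (p.1 • B + g, -h) := by
  intro g h
  have hQ₀' (y : Y) : Q₀ y = ℓ₀ (T.symm (y, 0)) := by rw [hQ₀, hP]
  obtain ⟨ζ, w, hPw, hLw⟩ :=
    exists_bordered_solution hQ₀' hL hcomp hBker hBrange hPkidem hPkrange g h
  refine ⟨(ζ, w), ⟨hPw, hLw⟩, ?_⟩
  rintro ⟨ζ', w'⟩ ⟨hPw', hLw'⟩
  obtain ⟨hζ, hw⟩ := eq_zero_of_bordered_eq_zero (c := ζ' - ζ) (x := w' - w)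
    hQ₀' hL hBrange hPkidem hPkrange (by simp [hPw, hPw'])
    (by simp [hLw, hLw', sub_smul])
  exact Prod.ext (sub_eq_zero.1 hζ) (sub_eq_zero.1 hw)

/-- For every pair `(g, h) ∈ Y × Z` there exists a unique pair
`(ζ, w) ∈ ℝ × X` with `P_k w = 0` and `L w = (ζ B + g, −h)`. -/
theorem stmt_8
    {X Y Z : Type*}
    [NormedAddCommGroup X] [NormedSpace ℝ X] [CompleteSpace X]
    [NormedAddCommGroup Y] [NormedSpace ℝ Y] [CompleteSpace Y]
    [NormedAddCommGroup Z] [NormedSpace ℝ Z] [CompleteSpace Z]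
    (T : X ≃L[ℝ] Y × Z)
    (P : Y →L[ℝ] X) (K : Z →L[ℝ] X)
    (hP : ∀ y : Y, P y = T.symm (y, 0))
    (hK : ∀ z : Z, K z = T.symm (0, z))
    (ℓ₀ : X →L[ℝ] Y)
    (Q₀ : Y →L[ℝ] Y) (hQ₀ : ∀ y : Y, Q₀ y = ℓ₀ (P y))
    (L : X →L[ℝ] Y × Z)
    (hL : ∀ u : X, L u = ((T u).1 - ℓ₀ u, (T u).2))
    (hcomp : IsCompactOperator ⇑Q₀)
    (B : Y) (hB : B ≠ 0)
    (hBker : LinearMap.ker ((ContinuousLinearMap.id ℝ Y - Q₀ : Y →L[ℝ] Y) : Y →ₗ[ℝ] Y) = Submodule.span ℝ {B})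
    (hBrange : B ∉ LinearMap.range ((ContinuousLinearMap.id ℝ Y - Q₀ : Y →L[ℝ] Y) : Y →ₗ[ℝ] Y))
    (P_k : X →L[ℝ] X)
    (hPkidem : ∀ x : X, P_k (P_k x) = P_k x)
    (hPkrange : LinearMap.range (P_k : X →ₗ[ℝ] X) = LinearMap.ker (L : X →ₗ[ℝ] Y × Z))
    (hkerL : (LinearMap.ker (L : X →ₗ[ℝ] Y × Z) : Submodule ℝ X) = Submodule.span ℝ {P B}) :
    ∀ (g : Y) (h : Z),
      ∃! p : ℝ × X, P_k p.2 = 0 ∧ L p.2 = (p.1 • B + g, -h) :=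
  stmt_8_general T P hP ℓ₀ Q₀ hQ₀ L hL hcomp B hBker hBrange P_k hPkidem hPkrange
end

section
/- (Proposition 2.4 of the paper, abstract form.) Suppose λ : (−ε₀, ε₀) → ℝ and z : (−ε₀, ε₀) → X are twice continuously differentiable with λ(0) = 0, z(0) = 0 and P_k z(ε) = 0 for all ε, and suppose that for every |ε| < ε₀ the element u(ε) := ε (P B + z(ε)) lies in Σ and solves (T u(ε))₂ + F(u(ε)) u(ε) = 0 and (T u(ε))₁ = (1 + λ(ε)) ( ℓ₀(u(ε)) + ℓ_*(u(ε)) ). Then λ′(0) = ζ and z′(0) = P ξ − K h, where ξ ∈ Y is the unique element satisfying (I − Q₀) ξ = ζ B + g − ℓ₀(K h) and 𝓀(P ξ) = 𝓀(K h). Consequently, as ε → 0, n(ε) := 1 + λ(ε) = 1 + ζ ε + o(ε) and u(ε) = ε P B + ε² (P ξ − K h) + o(ε²) in X. -/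
/-!
Write `u(ε) = ε (P B + z(ε))`. Applying `T⁻¹ = P ⊕ K` to the two equations gives the fixed-point
form `u = P ((1 + λ) (ℓ₀ u + ℓ_* u)) - K (F(u) u)`, and comparing the `ε²` coefficients of both
sides yields `z'(0) = P ξ₀ - K h` with `ξ₀ = ℓ₀ z'(0) + g + λ'(0) B` (using `ℓ₀ (P B) = Q₀ B = B`).
Since `Q₀ = ℓ₀ P`, this says `(I - Q₀) ξ₀ = λ'(0) B + g - ℓ₀ (K h)`; the definition of `ζ` puts
`ζ B + g - ℓ₀ (K h)` in the range of `I - Q₀` as well, and `B ∉ range (I - Q₀)` forces `λ'(0) = ζ`.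
Finally `𝓀 (z ε) = 0` gives `𝓀 (z'(0)) = 0`, i.e. `𝓀 (P ξ₀) = 𝓀 (K h)`, and this normalisation
singles out `ξ₀` because `ker (I - Q₀) = ℝ B` and `𝓀 (P B) = 1`.
-/

open Asymptotics Filter Topology

section Expansion

variable {E F : Type*} [NormedAddCommGroup E] [NormedSpace ℝ E]
  [NormedAddCommGroup F] [NormedSpace ℝ F]

theorem Asymptotics.IsLittleO.clm_apply {α : Type*} {l : Filter α} {A : α → E →L[ℝ] F}
    {x : α → E} {k₁ k₂ : α → ℝ} (hA : A =o[l] k₁) (hx : x =O[l] k₂) :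
    (fun t => A t (x t)) =o[l] fun t => k₁ t * k₂ t :=
  (isBigO_of_le (g := fun t => ‖A t‖ * ‖x t‖) l fun t => by
      rw [norm_mul, _root_.norm_norm, _root_.norm_norm]; exact (A t).le_opNorm (x t)).trans_isLittleO
    (hA.norm_left.mul_isBigO hx.norm_left)

theorem isBigO_smul_const {l : Filter ℝ} (f : ℝ → ℝ) (v : E) :
    (fun t => f t • v) =O[l] f :=
  isBigO_iff.2 ⟨‖v‖, .of_forall fun t => by rw [norm_smul, mul_comm]⟩

/-- Mean value inequality on `[0, 1]` for the remainder along `s ↦ x + s • h`, whose derivative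
`(fderiv ℝ f (x + s • h) - fderiv ℝ f x - D (s • h)) h` is `o(‖h‖)·‖h‖`. -/
theorem isLittleO_sub_taylor_two {f : E → F} {D : E →L[ℝ] E →L[ℝ] F} {x : E}
    (hf : ∀ᶠ y in 𝓝 x, DifferentiableAt ℝ f y) (hD : HasFDerivAt (fderiv ℝ f) D x) :
    (fun h => f (x + h) - f x - fderiv ℝ f x h - (1 / 2 : ℝ) • D h h) =o[𝓝 0]
      fun h => ‖h‖ ^ 2 := by
  refine isLittleO_iff.2 fun δ hδ => ?_
  obtain ⟨r, hr, hball⟩ := Metric.eventually_nhds_iff_ball.1 (hf.and (hD.isLittleO.def hδ))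
  filter_upwards [Metric.ball_mem_nhds 0 hr] with h hh
  have hseg : ∀ s ∈ Set.Icc (0 : ℝ) 1, x + s • h ∈ Metric.ball x r := fun s hs => by
    rw [mem_ball_zero_iff] at hh
    rw [Metric.mem_ball, dist_self_add_left, norm_smul, Real.norm_of_nonneg hs.1]
    exact (mul_le_of_le_one_left (norm_nonneg h) hs.2).trans_lt hh
  let γ : ℝ → F := fun s => f (x + s • h) - s • fderiv ℝ f x h - (s ^ 2 / 2) • D h h
  have hγ : ∀ s ∈ Set.Icc (0 : ℝ) 1, HasDerivWithinAt γ
      ((fderiv ℝ f (x + s • h) - fderiv ℝ f x - D (x + s • h - x)) h) (Set.Icc 0 1) s := by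
    intro s hs
    have hpath : HasDerivAt (fun s : ℝ => x + s • h) h s := by
      simpa using ((hasDerivAt_id s).smul_const h).const_add x
    have := (((hball _ (hseg s hs)).1.hasFDerivAt.comp_hasDerivAt s hpath).sub
      ((hasDerivAt_id s).smul_const (fderiv ℝ f x h))).sub
      (((hasDerivAt_pow 2 s).div_const 2).smul_const (D h h))
    convert this.hasDerivWithinAt using 1
    · rfl
    · simp only [add_sub_cancel_left, map_smul, FunLike.coe_sub, Pi.sub_apply,
        FunLike.coe_smul, Pi.smul_apply, one_smul]
      norm_num
  have hbound : ∀ s ∈ Set.Ico (0 : ℝ) 1,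
      ‖(fderiv ℝ f (x + s • h) - fderiv ℝ f x - D (x + s • h - x)) h‖ ≤ δ * ‖h‖ ^ 2 := by
    intro s hs
    have hs' := Set.Ico_subset_Icc_self hs
    have hsh : ‖x + s • h - x‖ ≤ ‖h‖ := by
      rw [add_sub_cancel_left, norm_smul, Real.norm_of_nonneg hs'.1]
      exact mul_le_of_le_one_left (norm_nonneg h) hs'.2
    calc _ ≤ δ * ‖x + s • h - x‖ * ‖h‖ :=
          (ContinuousLinearMap.le_opNorm _ _).trans
            (mul_le_mul_of_nonneg_right (hball _ (hseg s hs')).2 (norm_nonneg h))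
      _ ≤ δ * ‖h‖ * ‖h‖ := by gcongr
      _ = δ * ‖h‖ ^ 2 := by ring
  have := norm_image_sub_le_of_norm_deriv_le_segment' hγ hbound 1 (Set.right_mem_Icc.2 zero_le_one)
  simpa [γ, Real.norm_eq_abs, sub_sub, add_comm, add_left_comm, add_assoc] using this

theorem HasDerivAt.clm_apply_eq_zero_of_eventually {z : ℝ → E} {a : E} {x : ℝ}
    (hz : HasDerivAt z a x) (k : E →L[ℝ] F) (hk : ∀ᶠ t in 𝓝 x, k (z t) = 0) : k a = 0 :=
  (k.hasFDerivAt.comp_hasDerivAt x hz).unique ((hasDerivAt_const x 0).congr_of_eventuallyEq hk)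

def HasSecondOrderExpansion (u : ℝ → E) (v a : E) : Prop :=
  (fun t => u t - t • v - t ^ 2 • a) =o[𝓝 0] fun t => t ^ 2

namespace HasSecondOrderExpansion

variable {u w : ℝ → E} {v a b c : E}

theorem congr (hu : HasSecondOrderExpansion u v a) (h : u =ᶠ[𝓝 0] w) :
    HasSecondOrderExpansion w v a :=
  hu.congr' (h.mono fun t ht => by simp only [ht]) EventuallyEq.rfl

theorem add_isLittleO (hu : HasSecondOrderExpansion u v a) {r : ℝ → E}
    (hr : r =o[𝓝 0] fun t => t ^ 2) : HasSecondOrderExpansion (fun t => u t + r t) v a :=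
  (IsLittleO.add hu hr).congr_left fun t => by beta_reduce; abel

theorem add (hu : HasSecondOrderExpansion u v a) (hw : HasSecondOrderExpansion w b c) :
    HasSecondOrderExpansion (fun t => u t + w t) (v + b) (a + c) :=
  (IsLittleO.add hu hw).congr_left fun t => by simp only [smul_add]; abel

theorem sub (hu : HasSecondOrderExpansion u v a) (hw : HasSecondOrderExpansion w b c) :
    HasSecondOrderExpansion (fun t => u t - w t) (v - b) (a - c) :=
  (IsLittleO.sub hu hw).congr_left fun t => by simp only [smul_sub]; abel

theorem map (hu : HasSecondOrderExpansion u v a) (A : E →L[ℝ] F) :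
    HasSecondOrderExpansion (fun t => A (u t)) (A v) (A a) :=
  ((A.isBigO_comp _ _).trans_isLittleO hu).congr_left fun t => by simp

theorem isLittleO_sub_smul (hu : HasSecondOrderExpansion u v a) :
    (fun t => u t - t • v) =o[𝓝 0] fun t => t :=
  (IsLittleO.trans hu (isLittleO_pow_id one_lt_two)).add
    ((isBigO_smul_const _ a).trans_isLittleO (isLittleO_pow_id one_lt_two))
    |>.congr_left fun t => by abel

theorem isBigO (hu : HasSecondOrderExpansion u v a) : u =O[𝓝 0] fun t => t :=
  (hu.isLittleO_sub_smul.isBigO.add (isBigO_smul_const _ v)).congr_left fun t => by simp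

theorem tendsto (hu : HasSecondOrderExpansion u v a) : Tendsto u (𝓝 0) (𝓝 0) :=
  hu.isBigO.trans_tendsto tendsto_id

theorem unique (hu : HasSecondOrderExpansion u v a) (hb : HasSecondOrderExpansion u v b) :
    a = b := by
  have hsq : (fun t : ℝ => t ^ 2 • (b - a)) =o[𝓝 0] fun t => t ^ 2 :=
    (IsLittleO.sub hu hb).congr_left fun t => by rw [smul_sub]; abel
  refine (sub_eq_zero.1 (tendsto_const_nhds_iff (l := 𝓝[≠] (0 : ℝ)).1 ?_)).symm
  refine (hsq.tendsto_inv_smul_nhds_zero.mono_left (nhdsWithin_le_nhds (s := {0}ᶜ))).congr' ?_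
  filter_upwards [self_mem_nhdsWithin] with t ht
  rw [smul_smul, inv_mul_cancel₀ (pow_ne_zero 2 ht), one_smul]

theorem of_hasDerivAt {z : ℝ → E} (hz0 : z 0 = 0) (hz : HasDerivAt z a 0) (v : E) :
    HasSecondOrderExpansion (fun t => t • (v + z t)) v a := by
  have hz' : (fun t => z t - t • a) =o[𝓝 0] fun t => t := by
    simpa [hz0] using hz.isLittleO
  refine ((isBigO_refl (fun t : ℝ => t) _).smul_isLittleO hz').congr (fun t => ?_) (fun t => ?_)
  · module
  · simp [sq]

theorem one_add_smul {lam : ℝ → ℝ} {μ : ℝ} (hlam0 : lam 0 = 0) (hlam : HasDerivAt lam μ 0)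
    (hu : HasSecondOrderExpansion u v a) :
    HasSecondOrderExpansion (fun t => (1 + lam t) • u t) v (a + μ • v) := by
  have hlam' : (fun t => lam t - t * μ) =o[𝓝 0] fun t => t := by
    simpa [hlam0] using hlam.isLittleO
  have hlamO : lam =O[𝓝 0] fun t => t := by
    simpa [hlam0] using hlam.isBigO_sub
  have h₁ := hlamO.smul_isLittleO hu.isLittleO_sub_smul
  have h₂ := hlam'.smul_isBigO (isBigO_smul_const (fun t : ℝ => t) v (l := 𝓝 0))
  have h₃ := (h₁.add h₂).congr_right fun t => (sq t).symm
  exact (IsLittleO.add hu h₃).congr_left fun t => by module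

theorem clm_apply₂ (hu : HasSecondOrderExpansion u v a) (b : E →L[ℝ] E →L[ℝ] F) :
    HasSecondOrderExpansion (fun t => b (u t) (u t)) 0 (b v v) := by
  have he := hu.isLittleO_sub_smul
  have h₁ := ((b.isBigO_comp _ _).trans_isLittleO he).clm_apply hu.isBigO
  have h₂ := (isBigO_refl (fun t : ℝ => t) _).smul_isLittleO
    (((b v).isBigO_comp _ _).trans_isLittleO he)
  refine ((h₁.add h₂).congr_left fun t => ?_).congr_right fun t => (sq t).symm
  simp only [map_sub, map_smul, sub_apply, smul_apply]
  module

theorem comp {f : E → F} {D : E →L[ℝ] E →L[ℝ] F} (hf : ∀ᶠ y in 𝓝 0, DifferentiableAt ℝ f y)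
    (hD : HasFDerivAt (fderiv ℝ f) D 0) (hf0 : f 0 = 0) (hu : HasSecondOrderExpansion u v a) :
    HasSecondOrderExpansion (fun t => f (u t)) (fderiv ℝ f 0 v)
      (fderiv ℝ f 0 a + (1 / 2 : ℝ) • D v v) := by
  have hr := ((isLittleO_sub_taylor_two hf hD).comp_tendsto hu.tendsto).trans_isBigO
    (hu.isBigO.norm_left.pow 2)
  have := ((hu.map (fderiv ℝ f 0)).add (hu.clm_apply₂ ((1 / 2 : ℝ) • D))).add_isLittleO hr
  simp only [add_zero, smul_apply, Function.comp_def, zero_add, hf0] at this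
  exact this.congr (.of_forall fun t => by module)

theorem apply_self {F' : E →L[ℝ] E →L[ℝ] F} {G : E → E →L[ℝ] F} (hG : HasFDerivAt G F' 0)
    (hG0 : G 0 = 0) (hu : HasSecondOrderExpansion u v a) :
    HasSecondOrderExpansion (fun t => G (u t) (u t)) 0 (F' v v) := by
  have hG' : (fun x => G x - F' x) =o[𝓝 0] fun x => x := by simpa [hG0] using hG.isLittleO
  have hr := (hG'.comp_tendsto hu.tendsto).trans_isBigO hu.isBigO
  have := (hu.clm_apply₂ F').add_isLittleO
    ((hr.clm_apply hu.isBigO).congr_right fun t => (sq t).symm)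
  exact this.congr (.of_forall fun t => by simp)

end HasSecondOrderExpansion

end Expansion

section LinearAlgebra

variable {K V W : Type*} [Field K] [AddCommGroup V] [Module K V] [AddCommGroup W] [Module K W]

theorem eq_of_smul_add_mem_range {A : V →ₗ[K] W} {B : W} (hB : B ∉ LinearMap.range A)
    {μ ζ : K} {y : W} (hμ : μ • B + y ∈ LinearMap.range A) (hζ : ζ • B + y ∈ LinearMap.range A) :
    μ = ζ := by
  by_contra hne
  have := Submodule.smul_mem _ (μ - ζ)⁻¹ (Submodule.sub_mem _ hμ hζ)
  rw [add_sub_add_right_eq_sub, ← sub_smul, smul_smul, inv_mul_cancel₀ (sub_ne_zero.2 hne),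
    one_smul] at this
  exact hB this

theorem eq_of_map_eq_of_ker_eq_span {A : V →ₗ[K] W} {φ : V →ₗ[K] K} {B : V}
    (hker : LinearMap.ker A = K ∙ B) (hφB : φ B ≠ 0) {x y : V} (hA : A x = A y)
    (hφ : φ x = φ y) : x = y := by
  obtain ⟨c, hc⟩ := Submodule.mem_span_singleton.1 (hker ▸ LinearMap.sub_mem_ker_iff.2 hA)
  have hc0 : c * φ B = 0 := by rw [← smul_eq_mul, ← map_smul, hc, map_sub, hφ, sub_self]
  rw [← sub_eq_zero, ← hc, (mul_eq_zero.1 hc0).resolve_right hφB, zero_smul]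

end LinearAlgebra

section Branch

variable {X Y Z : Type*} [NormedAddCommGroup X] [NormedSpace ℝ X]
  [NormedAddCommGroup Y] [NormedSpace ℝ Y] [NormedAddCommGroup Z] [NormedSpace ℝ Z]
  {T : X ≃L[ℝ] Y × Z} {P : Y →L[ℝ] X} {K : Z →L[ℝ] X}

theorem ContinuousLinearEquiv.eq_sub_of_apply_eq (hP : ∀ y, P y = T.symm (y, 0))
    (hK : ∀ z, K z = T.symm (0, z)) {x : X} {y : Y} {w : Z} (h₁ : (T x).1 = y)
    (h₂ : (T x).2 + w = 0) : x = P y - K w := by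
  rw [hP, hK, ← map_sub, Prod.mk_sub_mk, sub_zero, zero_sub, ← h₁, ← eq_neg_of_add_eq_zero_left h₂,
    Prod.mk.eta, T.symm_apply_apply]

theorem deriv_eq_of_branch_equations (hP : ∀ y, P y = T.symm (y, 0))
    (hK : ∀ z, K z = T.symm (0, z)) {ℓ₀ : X →L[ℝ] Y} {ℓs : X → Y} {F : X → X →L[ℝ] Z}
    (hℓs : ContDiffAt ℝ 2 ℓs 0) (hℓs0 : ℓs 0 = 0) (hDℓs0 : fderiv ℝ ℓs 0 = 0)
    (hF : DifferentiableAt ℝ F 0) (hF0 : F 0 = 0) {B : Y} (hB : ℓ₀ (P B) = B)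
    {a : X} {μ : ℝ} {lam : ℝ → ℝ} {z : ℝ → X} (hlam0 : lam 0 = 0) (hlam : HasDerivAt lam μ 0)
    (hz0 : z 0 = 0) (hz : HasDerivAt z a 0)
    (hsol₁ : ∀ᶠ t in 𝓝 0, (T (t • (P B + z t))).1 =
      (1 + lam t) • (ℓ₀ (t • (P B + z t)) + ℓs (t • (P B + z t))))
    (hsol₂ : ∀ᶠ t in 𝓝 0, (T (t • (P B + z t))).2 + F (t • (P B + z t)) (t • (P B + z t)) = 0) :
    a = P (ℓ₀ a + (1 / 2 : ℝ) • fderiv ℝ (fderiv ℝ ℓs) 0 (P B) (P B) + μ • B) -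
      K (fderiv ℝ F 0 (P B) (P B)) := by
  have hu := HasSecondOrderExpansion.of_hasDerivAt hz0 hz (P B)
  have hℓsu := hu.comp ((hℓs.eventually (by simp)).mono fun y hy => hy.differentiableAt two_ne_zero)
    ((hℓs.fderiv_right (m := 1) le_rfl).differentiableAt one_ne_zero).hasFDerivAt hℓs0
  have hrhs := ((((hu.map ℓ₀).add hℓsu).one_add_smul hlam0 hlam).map P).sub
    ((hu.apply_self hF.hasFDerivAt hF0).map K)
  refine hu.unique <| by simpa [hDℓs0, hB] using hrhs.congr <| (hsol₁.and hsol₂).mono fun t ht =>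
    (ContinuousLinearEquiv.eq_sub_of_apply_eq hP hK ht.1 ht.2).symm

end Branch

theorem stmt_10_general
    {X Y Z : Type*}
    [NormedAddCommGroup X] [NormedSpace ℝ X]
    [NormedAddCommGroup Y] [NormedSpace ℝ Y]
    [NormedAddCommGroup Z] [NormedSpace ℝ Z]
    (T : X ≃L[ℝ] Y × Z)
    (P : Y →L[ℝ] X) (K : Z →L[ℝ] X)
    (hP : ∀ y : Y, P y = T.symm (y, 0))
    (hK : ∀ z : Z, K z = T.symm (0, z))
    (ℓ₀ : X →L[ℝ] Y)
    (Q₀ : Y →L[ℝ] Y) (hQ₀ : ∀ y : Y, Q₀ y = ℓ₀ (P y))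
    (L : X →L[ℝ] Y × Z)
    (B : Y)
    (hBker : LinearMap.ker ((ContinuousLinearMap.id ℝ Y - Q₀ : Y →L[ℝ] Y) : Y →ₗ[ℝ] Y) = Submodule.span ℝ {B})
    (hBrange : B ∉ LinearMap.range ((ContinuousLinearMap.id ℝ Y - Q₀ : Y →L[ℝ] Y) : Y →ₗ[ℝ] Y))
    (P_M : Y →L[ℝ] Y)
    (hPMrange : LinearMap.range (P_M : Y →ₗ[ℝ] Y) =
      LinearMap.range ((ContinuousLinearMap.id ℝ Y - Q₀ : Y →L[ℝ] Y) : Y →ₗ[ℝ] Y))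
    (P_k : X →L[ℝ] X) (k : X →L[ℝ] ℝ)
    (hPk : ∀ x : X, P_k x = k x • P B)
    (hkPB : k (P B) = 1)
    (R₀ : ℝ) (hR₀ : 0 < R₀)
    (F : X → X →L[ℝ] Z)
    (hF : ContDiffOn ℝ 1 F (Metric.ball (0 : X) R₀))
    (hF0 : F 0 = 0)
    (ℓs : X → Y)
    (hℓs : ContDiffOn ℝ 2 ℓs (Metric.ball (0 : X) R₀))
    (hℓs0 : ℓs 0 = 0)
    (hDℓs0 : fderiv ℝ ℓs 0 = 0)
    (h : Z) (hh : h = fderiv ℝ F 0 (P B) (P B))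
    (g : Y) (hg : g = (1 / 2 : ℝ) • fderiv ℝ (fun x => fderiv ℝ ℓs x) 0 (P B) (P B))
    (ζ : ℝ)
    (hζ : ℓ₀ (K h) - g - P_M (ℓ₀ (K h) - g) = ζ • B)
    (ε₀ : ℝ) (hε₀ : 0 < ε₀)
    (lam : ℝ → ℝ) (z : ℝ → X)
    (hlam : ContDiffOn ℝ 2 lam (Set.Ioo (-ε₀) ε₀))
    (hz : ContDiffOn ℝ 2 z (Set.Ioo (-ε₀) ε₀))
    (hlam0 : lam 0 = 0) (hz0 : z 0 = 0)
    (hPkz : ∀ ε ∈ Set.Ioo (-ε₀) ε₀, P_k (z ε) = 0)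
    (hsol₂ : ∀ ε ∈ Set.Ioo (-ε₀) ε₀,
      (T (ε • (P B + z ε))).2 + F (ε • (P B + z ε)) (ε • (P B + z ε)) = 0)
    (hsol₁ : ∀ ε ∈ Set.Ioo (-ε₀) ε₀,
      (T (ε • (P B + z ε))).1 =
        (1 + lam ε) • (ℓ₀ (ε • (P B + z ε)) + ℓs (ε • (P B + z ε)))) :
    (∃! ξ : Y, (ξ - Q₀ ξ = ζ • B + g - ℓ₀ (K h) ∧ k (P ξ) = k (K h))) ∧
    ∀ ξ : Y, (ξ - Q₀ ξ = ζ • B + g - ℓ₀ (K h) ∧ k (P ξ) = k (K h)) →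
      deriv lam 0 = ζ ∧
      deriv z 0 = P ξ - K h ∧
      (fun ε : ℝ => lam ε - ζ * ε) =o[nhdsWithin 0 (Set.Ioo (-ε₀) ε₀)]
        (fun ε : ℝ => ε) ∧
      (fun ε : ℝ => ε • (P B + z ε) - ε • P B - (ε ^ 2) • (P ξ - K h))
        =o[nhdsWithin 0 (Set.Ioo (-ε₀) ε₀)] (fun ε : ℝ => ε ^ 2) := by
  have hI : Set.Ioo (-ε₀) ε₀ ∈ 𝓝 (0 : ℝ) := Ioo_mem_nhds (neg_neg_iff_pos.2 hε₀) hε₀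
  have hball : Metric.ball (0 : X) R₀ ∈ 𝓝 0 := Metric.ball_mem_nhds 0 hR₀
  have hzd := ((hz.contDiffAt hI).differentiableAt two_ne_zero).hasDerivAt
  have hlamd := ((hlam.contDiffAt hI).differentiableAt two_ne_zero).hasDerivAt
  set a := deriv z 0
  set μ := deriv lam 0
  have hℓ₀PB : ℓ₀ (P B) = B := by
    have hB : B - Q₀ B = 0 := LinearMap.mem_ker.1 (hBker ▸ Submodule.mem_span_singleton_self B)
    rw [← hQ₀, (sub_eq_zero.1 hB).symm]
  have ha : a = P (ℓ₀ a + g + μ • B) - K h := by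
    have := deriv_eq_of_branch_equations hP hK (hℓs.contDiffAt hball) hℓs0 hDℓs0
      ((hF.contDiffAt hball).differentiableAt one_ne_zero) hF0 hℓ₀PB hlam0 hlamd hz0 hzd
      (mem_of_superset hI hsol₁) (mem_of_superset hI hsol₂)
    rwa [← hh, ← hg] at this
  have hka : k a = 0 := by
    have hPB : P B ≠ 0 := fun h0 => by simp [h0] at hkPB
    exact hzd.clm_apply_eq_zero_of_eventually k <|
      mem_of_superset hI fun t ht => by simpa [hPk, hPB] using hPkz t ht
  set ξ₀ := ℓ₀ a + g + μ • B with hξ₀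
  have hPξ₀ : P ξ₀ = a + K h := sub_eq_iff_eq_add.1 ha.symm
  have hAξ₀ : ξ₀ - Q₀ ξ₀ = μ • B + (g - ℓ₀ (K h)) := by rw [hQ₀, hPξ₀, map_add, hξ₀]; abel
  have hkξ₀ : k (P ξ₀) = k (K h) := by rw [hPξ₀, map_add, hka, zero_add]
  have hμζ : μ = ζ := eq_of_smul_add_mem_range hBrange ⟨ξ₀, hAξ₀⟩ <| by
    rw [← hPMrange, show ζ • B + (g - ℓ₀ (K h)) = -P_M (ℓ₀ (K h) - g) by rw [← hζ]; abel]
    exact neg_mem (LinearMap.mem_range_self _ _)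
  have hsol : ξ₀ - Q₀ ξ₀ = ζ • B + g - ℓ₀ (K h) := by rw [hAξ₀, hμζ, add_sub_assoc]
  have huniq : ∀ ξ : Y, ξ - Q₀ ξ = ζ • B + g - ℓ₀ (K h) ∧ k (P ξ) = k (K h) → ξ = ξ₀ :=
    fun ξ hξ => eq_of_map_eq_of_ker_eq_span hBker (φ := ((k.comp P : Y →L[ℝ] ℝ) : Y →ₗ[ℝ] ℝ))
      (by simp [hkPB]) (hξ.1.trans hsol.symm) (hξ.2.trans hkξ₀.symm)
  refine ⟨⟨ξ₀, ⟨hsol, hkξ₀⟩, huniq⟩, fun ξ hξ => ?_⟩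
  obtain rfl := huniq ξ hξ
  refine ⟨hμζ, ha, ?_, ?_⟩
  · simpa [hlam0, hμζ, mul_comm] using hlamd.isLittleO.mono nhdsWithin_le_nhds
  · rw [← ha]
    exact (HasSecondOrderExpansion.of_hasDerivAt hz0 hzd (P B)).mono nhdsWithin_le_nhds

/-- Proposition 2.4, abstract form: if `λ, z` are `C²` on `(−ε₀, ε₀)` with
`λ 0 = 0`, `z 0 = 0`, `P_k (z ε) = 0`, and `u(ε) := ε (P B + z ε)` lies in `Σ` and solves
`(T u)₂ + F(u) u = 0`, `(T u)₁ = (1 + λ(ε)) (ℓ₀(u) + ℓ_*(u))`, then `λ′(0) = ζ` and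
`z′(0) = P ξ − K h`, where `ξ` is the unique element of `Y` with
`(I − Q₀) ξ = ζ B + g − ℓ₀ (K h)` and `𝓀 (P ξ) = 𝓀 (K h)`; consequently
`n(ε) = 1 + ζ ε + o(ε)` and `u(ε) = ε P B + ε² (P ξ − K h) + o(ε²)` as `ε → 0`.
Here `h := (DF(0)[P B])(P B)`, `g := ½ D²ℓ_*(0)[P B, P B]`, and `ζ` is determined by
`(I − P_M)(ℓ₀(K h) − g) = ζ B`. -/
theorem stmt_10
    {X Y Z : Type*}
    [NormedAddCommGroup X] [NormedSpace ℝ X] [CompleteSpace X]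
    [NormedAddCommGroup Y] [NormedSpace ℝ Y] [CompleteSpace Y]
    [NormedAddCommGroup Z] [NormedSpace ℝ Z] [CompleteSpace Z]
    (T : X ≃L[ℝ] Y × Z)
    (P : Y →L[ℝ] X) (K : Z →L[ℝ] X)
    (hP : ∀ y : Y, P y = T.symm (y, 0))
    (hK : ∀ z : Z, K z = T.symm (0, z))
    (ℓ₀ : X →L[ℝ] Y)
    (Q₀ : Y →L[ℝ] Y) (hQ₀ : ∀ y : Y, Q₀ y = ℓ₀ (P y))
    (L : X →L[ℝ] Y × Z)
    (hL : ∀ u : X, L u = ((T u).1 - ℓ₀ u, (T u).2))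
    (hcomp : IsCompactOperator ⇑Q₀)
    (B : Y) (hB : B ≠ 0)
    (hBker : LinearMap.ker ((ContinuousLinearMap.id ℝ Y - Q₀ : Y →L[ℝ] Y) : Y →ₗ[ℝ] Y) = Submodule.span ℝ {B})
    (hBrange : B ∉ LinearMap.range ((ContinuousLinearMap.id ℝ Y - Q₀ : Y →L[ℝ] Y) : Y →ₗ[ℝ] Y))
    (P_M : Y →L[ℝ] Y)
    (hPMidem : ∀ y : Y, P_M (P_M y) = P_M y)
    (hPMrange : LinearMap.range (P_M : Y →ₗ[ℝ] Y) =
      LinearMap.range ((ContinuousLinearMap.id ℝ Y - Q₀ : Y →L[ℝ] Y) : Y →ₗ[ℝ] Y))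
    (hPMB : P_M B = 0)
    (P_k : X →L[ℝ] X) (k : X →L[ℝ] ℝ)
    (hPk : ∀ x : X, P_k x = k x • P B)
    (hPkrange : LinearMap.range (P_k : X →ₗ[ℝ] X) = LinearMap.ker (L : X →ₗ[ℝ] Y × Z))
    (hkerL : (LinearMap.ker (L : X →ₗ[ℝ] Y × Z) : Submodule ℝ X) = Submodule.span ℝ {P B})
    (hkPB : k (P B) = 1)
    (R₀ : ℝ) (hR₀ : 0 < R₀)
    (F : X → X →L[ℝ] Z)
    (hF : ContDiffOn ℝ 1 F (Metric.ball (0 : X) R₀))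
    (hF0 : F 0 = 0)
    (ℓs : X → Y)
    (hℓs : ContDiffOn ℝ 2 ℓs (Metric.ball (0 : X) R₀))
    (hℓs0 : ℓs 0 = 0)
    (hDℓs0 : fderiv ℝ ℓs 0 = 0)
    (h : Z) (hh : h = fderiv ℝ F 0 (P B) (P B))
    (g : Y) (hg : g = (1 / 2 : ℝ) • fderiv ℝ (fun x => fderiv ℝ ℓs x) 0 (P B) (P B))
    (ζ : ℝ)
    (hζ : ℓ₀ (K h) - g - P_M (ℓ₀ (K h) - g) = ζ • B)
    (ε₀ : ℝ) (hε₀ : 0 < ε₀)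
    (lam : ℝ → ℝ) (z : ℝ → X)
    (hlam : ContDiffOn ℝ 2 lam (Set.Ioo (-ε₀) ε₀))
    (hz : ContDiffOn ℝ 2 z (Set.Ioo (-ε₀) ε₀))
    (hlam0 : lam 0 = 0) (hz0 : z 0 = 0)
    (hPkz : ∀ ε ∈ Set.Ioo (-ε₀) ε₀, P_k (z ε) = 0)
    (hmem : ∀ ε ∈ Set.Ioo (-ε₀) ε₀, ε • (P B + z ε) ∈ Metric.ball (0 : X) R₀)
    (hsol₂ : ∀ ε ∈ Set.Ioo (-ε₀) ε₀,
      (T (ε • (P B + z ε))).2 + F (ε • (P B + z ε)) (ε • (P B + z ε)) = 0)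
    (hsol₁ : ∀ ε ∈ Set.Ioo (-ε₀) ε₀,
      (T (ε • (P B + z ε))).1 =
        (1 + lam ε) • (ℓ₀ (ε • (P B + z ε)) + ℓs (ε • (P B + z ε)))) :
    (∃! ξ : Y, (ξ - Q₀ ξ = ζ • B + g - ℓ₀ (K h) ∧ k (P ξ) = k (K h))) ∧
    ∀ ξ : Y, (ξ - Q₀ ξ = ζ • B + g - ℓ₀ (K h) ∧ k (P ξ) = k (K h)) →
      deriv lam 0 = ζ ∧
      deriv z 0 = P ξ - K h ∧
      (fun ε : ℝ => lam ε - ζ * ε) =o[nhdsWithin 0 (Set.Ioo (-ε₀) ε₀)]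
        (fun ε : ℝ => ε) ∧
      (fun ε : ℝ => ε • (P B + z ε) - ε • P B - (ε ^ 2) • (P ξ - K h))
        =o[nhdsWithin 0 (Set.Ioo (-ε₀) ε₀)] (fun ε : ℝ => ε ^ 2) :=
  stmt_10_general T P K hP hK ℓ₀ Q₀ hQ₀ L B hBker hBrange P_M hPMrange P_k k hPk hkPB R₀ hR₀ F hF
    hF0 ℓs hℓs hℓs0 hDℓs0 h hh g hg ζ hζ ε₀ hε₀ lam z hlam hz hlam0 hz0 hPkz hsol₂ hsol₁
end
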